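/- Under the hypotheses of the almost-sure GAS theorem (conditions (i)–(v) with V_p, α₁, α₂, λ₀, λ̃, λ̄, μ), the system additionally satisfies almost sure Lyapunov stability: with probability one, for every ε > 0 there is δ > 0 such that ‖x₀‖ < δ implies sup_{t≥0} ‖x(t)‖ < ε. -/

import Mathlib

/-!
Set `K m = M + ⌈λ₀ m / log μ⌉`, so that `μ ^ K m ≥ exp (λ₀ m)`. The pmf bound (iv) and the
Chernoff-type estimate `a ^ k ≤ (μ a) ^ k / μ ^ K` for `k ≥ K` give
`ℙ (N m ≥ K m) ≤ exp ((μ λ̄ - λ̃ - λ₀) m)`, which is summable by (v). By Borel–Cantelli, almost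
surely `N m < K m` for all large `m`, and as `N` is nondecreasing, `μ ^ N t * exp (-λ₀ t) ≤ C ω`
for all `t ≥ 0`. Along every trajectory `exp (λ₀ t) V_σ(t) (x t)` does not increase between
switches and grows at most by the factor `μ` at each switch, so `α₁ ‖x t‖ ≤ C ω α₂ ‖x₀‖`;
continuity of `α₂` at `0` provides `δ`.
-/

open Real Set Filter MeasureTheory

section Lyapunov

variable {E P : Type*} [NormedAddCommGroup E] [NormedSpace ℝ E]

lemma antitoneOn_exp_mul_comp {V : E → ℝ} (hV : ContDiff ℝ 1 V) {x g : ℝ → E} {lam a b : ℝ}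
    (hx : ContinuousOn x (Icc a b)) (hx' : ∀ t ∈ Ioo a b, HasDerivAt x (g t) t)
    (hdecay : ∀ t ∈ Ioo a b, fderiv ℝ V (x t) (g t) ≤ -lam * V (x t)) :
    AntitoneOn (fun t => exp (lam * t) * V (x t)) (Icc a b) := by
  have hderiv : ∀ t ∈ Ioo a b, HasDerivAt (fun s => exp (lam * s) * V (x s))
      (exp (lam * t) * lam * V (x t) + exp (lam * t) * fderiv ℝ V (x t) (g t)) t := fun t ht =>
    (by simpa using ((hasDerivAt_id t).const_mul lam).exp : HasDerivAt (fun s => exp (lam * s))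
      (exp (lam * t) * lam) t).mul
      ((hV.differentiable one_ne_zero (x t)).hasFDerivAt.comp_hasDerivAt t (hx' t ht))
  refine antitoneOn_of_deriv_nonpos (convex_Icc a b) ?_ ?_ ?_
  · exact (continuous_exp.comp (continuous_const_mul lam)).continuousOn.mul
      (hV.continuous.comp_continuousOn hx)
  · rw [interior_Icc]
    exact fun t ht => (hderiv t ht).differentiableAt.differentiableWithinAt
  · rw [interior_Icc]
    intro t ht
    rw [(hderiv t ht).deriv]
    nlinarith [mul_le_mul_of_nonneg_left (hdecay t ht) (exp_pos (lam * t)).le]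

lemma StrictMono.notMem_range_of_mem_Ioo {τ : ℕ → ℝ} (hτ : StrictMono τ) {i : ℕ} {t : ℝ}
    (ht : t ∈ Ioo (τ i) (τ (i + 1))) : t ∉ range τ := by
  rintro ⟨j, rfl⟩
  rcases le_or_gt j i with hj | hj
  · exact (hτ.monotone hj).not_gt ht.1
  · exact (hτ.monotone hj).not_gt ht.2

lemma exp_mul_lyapunov_le_of_switched {f : P → E → E} {V : P → E → ℝ} {σ : ℝ → P}
    {τ : ℕ → ℝ} {x : ℝ → E} {lam μ : ℝ}
    (hV : ∀ p, ContDiff ℝ 1 (V p)) (hdecay : ∀ p y, fderiv ℝ (V p) y (f p y) ≤ -lam * V p y)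
    (hratio : ∀ p q y, V p y ≤ μ * V q y) (hμ : 0 ≤ μ)
    (hτ0 : τ 0 = 0) (hτ : StrictMono τ)
    (hσ : ∀ i, ∀ t ∈ Ico (τ i) (τ (i + 1)), σ t = σ (τ i))
    (hx : Continuous x) (hsol : ∀ t, 0 ≤ t → t ∉ range τ → HasDerivAt x (f (σ t) (x t)) t) :
    ∀ i, ∀ t ∈ Icc (τ i) (τ (i + 1)),
      exp (lam * t) * V (σ (τ i)) (x t) ≤ μ ^ i * V (σ 0) (x 0) := by
  have hdecay_on : ∀ i, AntitoneOn (fun t => exp (lam * t) * V (σ (τ i)) (x t))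
      (Icc (τ i) (τ (i + 1))) := by
    intro i
    refine antitoneOn_exp_mul_comp (hV _) hx.continuousOn (fun t ht => ?_) fun t _ => hdecay _ _
    have hsolt := hsol t ((hτ0 ▸ hτ.monotone (Nat.zero_le i)).trans ht.1.le)
      (hτ.notMem_range_of_mem_Ioo ht)
    rwa [hσ i t (Ioo_subset_Ico_self ht)] at hsolt
  have hleft : ∀ i, τ i ∈ Icc (τ i) (τ (i + 1)) := fun i => left_mem_Icc.2 (hτ i.lt_succ_self).le
  intro i
  induction i with
  | zero =>
    intro t ht
    simpa [hτ0] using hdecay_on 0 (hleft 0) ht ht.1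
  | succ i ih =>
    intro t ht
    calc exp (lam * t) * V (σ (τ (i + 1))) (x t)
        ≤ exp (lam * τ (i + 1)) * V (σ (τ (i + 1))) (x (τ (i + 1))) :=
        hdecay_on (i + 1) (hleft _) ht ht.1
      _ ≤ exp (lam * τ (i + 1)) * (μ * V (σ (τ i)) (x (τ (i + 1)))) :=
        mul_le_mul_of_nonneg_left (hratio _ _ _) (exp_pos _).le
      _ = μ * (exp (lam * τ (i + 1)) * V (σ (τ i)) (x (τ (i + 1)))) := by ring
      _ ≤ μ * (μ ^ i * V (σ 0) (x 0)) :=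
        mul_le_mul_of_nonneg_left (ih _ (right_mem_Icc.2 (hleft i).2)) hμ
      _ = μ ^ (i + 1) * V (σ 0) (x 0) := by ring

lemma lyapunov_comparison_of_switched {f : P → E → E} {V : P → E → ℝ} {σ : ℝ → P}
    {τ : ℕ → ℝ} {x : ℝ → E} {α₁ α₂ : ℝ → ℝ} {lam μ : ℝ}
    (hV : ∀ p, ContDiff ℝ 1 (V p)) (hsandwich : ∀ p y, α₁ ‖y‖ ≤ V p y ∧ V p y ≤ α₂ ‖y‖)
    (hdecay : ∀ p y, fderiv ℝ (V p) y (f p y) ≤ -lam * V p y)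
    (hratio : ∀ p q y, V p y ≤ μ * V q y) (hμ : 0 ≤ μ)
    (hτ0 : τ 0 = 0) (hτ : StrictMono τ)
    (hσ : ∀ i, ∀ t ∈ Ico (τ i) (τ (i + 1)), σ t = σ (τ i))
    (hx : Continuous x) (hsol : ∀ t, 0 ≤ t → t ∉ range τ → HasDerivAt x (f (σ t) (x t)) t)
    {n : ℕ} {t : ℝ} (ht : t ∈ Ico (τ n) (τ (n + 1))) :
    α₁ ‖x t‖ ≤ μ ^ n * exp (-(lam * t)) * α₂ ‖x 0‖ := by
  have hchain := exp_mul_lyapunov_le_of_switched hV hdecay hratio hμ hτ0 hτ hσ hx hsol n t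
    (Ico_subset_Icc_self ht)
  rw [← hσ n t ht, ← le_div_iff₀' (exp_pos _), div_eq_mul_inv, ← exp_neg] at hchain
  calc α₁ ‖x t‖ ≤ V (σ t) (x t) := (hsandwich _ _).1
    _ ≤ μ ^ n * V (σ 0) (x 0) * exp (-(lam * t)) := hchain
    _ ≤ μ ^ n * exp (-(lam * t)) * α₂ ‖x 0‖ := by
      rw [mul_right_comm]; gcongr; exact (hsandwich _ _).2

end Lyapunov

lemma pow_eq_exp_mul_log {μ : ℝ} (hμ : 0 < μ) (k : ℕ) : μ ^ k = exp (k * log μ) := by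
  rw [exp_nat_mul, exp_log hμ]

lemma exp_le_pow_ceil_div_log {μ : ℝ} (hμ : 1 < μ) (x : ℝ) : exp x ≤ μ ^ ⌈x / log μ⌉₊ := by
  rw [pow_eq_exp_mul_log (by linarith)]
  exact exp_le_exp.2 ((div_le_iff₀ (log_pos hμ)).1 (Nat.le_ceil _))

lemma pow_ceil_div_log_le {μ x : ℝ} (hμ : 1 < μ) (hx : 0 ≤ x) :
    μ ^ ⌈x / log μ⌉₊ ≤ μ * exp x := by
  have hlog := log_pos hμ
  have hceil : (⌈x / log μ⌉₊ : ℝ) * log μ ≤ x + log μ := by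
    have := mul_le_mul_of_nonneg_right (Nat.ceil_lt_add_one (div_nonneg hx hlog.le)).le hlog.le
    rwa [add_mul, div_mul_cancel₀ _ hlog.ne', one_mul] at this
  calc μ ^ ⌈x / log μ⌉₊ ≤ exp (x + log μ) := by
        rw [pow_eq_exp_mul_log (by linarith)]; exact exp_le_exp.2 hceil
    _ = μ * exp x := by rw [exp_add, exp_log (by linarith), mul_comm]

lemma pow_le_pow_succ_mul_exp_of_lt_add_ceil {μ x : ℝ} (hμ : 1 < μ) (hx : 0 ≤ x) {n M : ℕ}
    (hn : n < M + ⌈x / log μ⌉₊) : μ ^ n ≤ μ ^ (M + 1) * exp x :=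
  calc μ ^ n ≤ μ ^ (M + ⌈x / log μ⌉₊) := pow_le_pow_right₀ hμ.le hn.le
    _ ≤ μ ^ M * (μ * exp x) := by rw [pow_add]; gcongr; exact pow_ceil_div_log_le hμ hx
    _ = μ ^ (M + 1) * exp x := by ring

lemma measure_le_le_of_pmf_le {Ω : Type*} [MeasurableSpace Ω] (ℙ : Measure Ω) (N : Ω → ℕ)
    {c a μ : ℝ} (hc : 0 ≤ c) (ha : 0 ≤ a) (hμ : 1 ≤ μ) {M K : ℕ} (hMK : M ≤ K)
    (hpmf : ∀ k, M ≤ k → ℙ {ω | N ω = k} ≤ ENNReal.ofReal (c * a ^ k / k.factorial)) :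
    ℙ {ω | K ≤ N ω} ≤ ENNReal.ofReal (c / μ ^ K * exp (μ * a)) := by
  set g : ℕ → ℝ := fun k => (μ * a) ^ k / k.factorial
  have hg : ∀ k, 0 ≤ g k := fun k => by positivity
  have hcover : {ω | K ≤ N ω} ⊆ ⋃ j : ℕ, {ω | N ω = K + j} := fun ω hω =>
    mem_iUnion.2 ⟨N ω - K, (Nat.add_sub_of_le hω).symm⟩
  have hterm : ∀ j, c * a ^ (K + j) / (K + j).factorial ≤ c / μ ^ K * g (K + j) := by
    intro j
    have hμK : μ ^ K ≤ μ ^ (K + j) := pow_le_pow_right₀ hμ (Nat.le_add_right K j)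
    calc c * a ^ (K + j) / (K + j).factorial = c * a ^ (K + j) / (K + j).factorial * 1 := by ring
      _ ≤ c * a ^ (K + j) / (K + j).factorial * (μ ^ (K + j) / μ ^ K) := by
        gcongr
        exact (one_le_div (by positivity)).2 hμK
      _ = c / μ ^ K * g (K + j) := by simp only [g]; ring
  calc ℙ {ω | K ≤ N ω} ≤ ∑' j, ℙ {ω | N ω = K + j} :=
        (measure_mono hcover).trans (measure_iUnion_le _)
    _ ≤ ∑' j, ENNReal.ofReal (c / μ ^ K * g (K + j)) := ENNReal.tsum_le_tsum fun j =>
      (hpmf _ (hMK.trans (Nat.le_add_right K j))).trans (ENNReal.ofReal_le_ofReal (hterm j))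
    _ ≤ ENNReal.ofReal (c / μ ^ K * exp (μ * a)) := by
      refine ENNReal.tsum_le_of_sum_range_le fun n => ?_
      rw [← ENNReal.ofReal_sum_of_nonneg fun j _ => by positivity, ← Finset.mul_sum]
      refine ENNReal.ofReal_le_ofReal (mul_le_mul_of_nonneg_left ?_ (by positivity))
      calc ∑ j ∈ Finset.range n, g (K + j) ≤ ∑ k ∈ Finset.range (K + n), g k := by
            rw [Finset.sum_range_add]
            exact le_add_of_nonneg_left (Finset.sum_nonneg fun k _ => hg k)
        _ ≤ exp (μ * a) := sum_le_exp_of_nonneg (by positivity) _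

lemma measure_le_le_exp_of_pmf_le_poisson {Ω : Type*} [MeasurableSpace Ω] (ℙ : Measure Ω)
    (N : Ω → ℕ) {lam lamTilde lamBar μ t : ℝ} (ht : 0 ≤ t) (hlb : 0 ≤ lamBar) (hμ : 1 ≤ μ)
    {M K : ℕ} (hMK : M ≤ K) (hK : exp (lam * t) ≤ μ ^ K)
    (hpmf : ∀ k, M ≤ k →
      ℙ {ω | N ω = k} ≤ ENNReal.ofReal (exp (-lamTilde * t) * (lamBar * t) ^ k / k.factorial)) :
    ℙ {ω | K ≤ N ω} ≤ ENNReal.ofReal (exp ((μ * lamBar - lamTilde - lam) * t)) := by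
  refine (measure_le_le_of_pmf_le ℙ N (exp_pos _).le (by positivity) hμ hMK hpmf).trans
    (ENNReal.ofReal_le_ofReal ?_)
  calc exp (-lamTilde * t) / μ ^ K * exp (μ * (lamBar * t))
      ≤ exp (-lamTilde * t) / exp (lam * t) * exp (μ * (lamBar * t)) := by gcongr
    _ = exp ((μ * lamBar - lamTilde - lam) * t) := by
      rw [← exp_sub, ← exp_add]; ring_nf

lemma ae_eventually_notMem_of_measure_le_pow {Ω : Type*} [MeasurableSpace Ω] {ℙ : Measure Ω}
    {S : ℕ → Set Ω} {r : ENNReal} (hr : r < 1) (hS : ∀ m, ℙ (S m) ≤ r ^ m) :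
    ∀ᵐ ω ∂ℙ, ∀ᶠ m in atTop, ω ∉ S m :=
  ae_eventually_notMem ((ENNReal.tsum_le_tsum hS).trans_lt (tsum_geometric_lt_top.2 hr)).ne

lemma StrictMono.monotoneOn_of_mem_Ico {τ : ℕ → ℝ} (hτ : StrictMono τ) {N : ℝ → ℕ} {s : Set ℝ}
    (hN : ∀ t ∈ s, t ∈ Ico (τ (N t)) (τ (N t + 1))) : MonotoneOn N s := by
  intro t ht u hu htu
  exact Nat.lt_succ_iff.1 (hτ.lt_iff_lt.1 ((hN t ht).1.trans_lt (htu.trans_lt (hN u hu).2)))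

lemma exists_pow_mul_exp_neg_le {N : ℝ → ℕ} (hN : MonotoneOn N (Ici 0)) {μ lam C₀ : ℝ}
    (hμ : 1 ≤ μ) (hlam : 0 ≤ lam) (hC₀ : 0 < C₀)
    (h : ∀ᶠ m : ℕ in atTop, μ ^ N m ≤ C₀ * exp (lam * m)) :
    ∃ C > 0, ∀ t, 0 ≤ t → μ ^ N t * exp (-(lam * t)) ≤ C := by
  obtain ⟨m₀, hm₀⟩ := eventually_atTop.1 h
  refine ⟨C₀ * exp (lam * (m₀ + 1)), by positivity, fun t ht => ?_⟩
  set m := max ⌈t⌉₊ m₀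
  have htm : t ≤ m := (Nat.le_ceil t).trans (by exact_mod_cast le_max_left _ _)
  have hmt : (m : ℝ) ≤ t + (m₀ + 1) := by
    rw [Nat.cast_max]
    exact max_le (by linarith [Nat.ceil_lt_add_one ht]) (by linarith)
  calc μ ^ N t * exp (-(lam * t)) ≤ C₀ * exp (lam * m) * exp (-(lam * t)) := by
        gcongr
        exact (pow_le_pow_right₀ hμ (hN ht (ht.trans htm) htm)).trans (hm₀ m (le_max_right _ _))
    _ = C₀ * exp (lam * (m - t)) := by rw [mul_assoc, ← exp_add]; ring_nf
    _ ≤ C₀ * exp (lam * (m₀ + 1)) := by gcongr; linarith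

lemma exists_pos_lt_of_le_mul {α₁ α₂ : ℝ → ℝ} (hα₁ : StrictMonoOn α₁ (Ici 0)) (hα₁0 : α₁ 0 = 0)
    (hα₂ : ContinuousAt α₂ 0) (hα₂0 : α₂ 0 = 0) {C ε : ℝ} (hC : 0 < C) (hε : 0 < ε) :
    ∃ δ > 0, ∀ r s, 0 ≤ r → 0 ≤ s → s < δ → α₁ r ≤ C * α₂ s → r < ε := by
  have hα₁ε : 0 < α₁ ε := hα₁0 ▸ hα₁ self_mem_Ici hε.le hε
  obtain ⟨δ, hδ, hα₂δ⟩ := Metric.continuousAt_iff.1 hα₂ (α₁ ε / C) (by positivity)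
  refine ⟨δ, hδ, fun r s hr hs hsδ hrs => (hα₁.lt_iff_lt hr hε.le).1 ?_⟩
  have hα₂s : α₂ s < α₁ ε / C := by
    have := hα₂δ (by rwa [Real.dist_eq, sub_zero, abs_of_nonneg hs])
    rw [hα₂0, Real.dist_eq, sub_zero] at this
    exact (le_abs_self _).trans_lt this
  calc α₁ r ≤ C * α₂ s := hrs
    _ < C * (α₁ ε / C) := by gcongr
    _ = α₁ ε := mul_div_cancel₀ _ hC.ne'

theorem randomly_switched_as_stability_general
    {n : ℕ} {P : Type*}
    {Ω : Type*} [MeasurableSpace Ω] (ℙ : Measure Ω)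
    (f : P → EuclideanSpace ℝ (Fin n) → EuclideanSpace ℝ (Fin n))
    (V : P → EuclideanSpace ℝ (Fin n) → ℝ)
    (hVC1 : ∀ p, ContDiff ℝ 1 (V p))
    (α₁ α₂ : ℝ → ℝ)
    (hα₁mono : StrictMonoOn α₁ (Set.Ici 0))
    (hα₁0 : α₁ 0 = 0)
    (hα₂cont : Continuous α₂) (hα₂mono : StrictMonoOn α₂ (Set.Ici 0))
    (hα₂0 : α₂ 0 = 0)
    (lam₀ lamTilde lamBar μ : ℝ) (M : ℕ)
    (hlam : 0 < lam₀) (hlb : 0 < lamBar) (hμ : 1 < μ)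
    -- (i) class-K∞ sandwich
    (hsandwich : ∀ p y, α₁ ‖y‖ ≤ V p y ∧ V p y ≤ α₂ ‖y‖)
    -- (ii) decay of each subsystem
    (hdecay : ∀ p y, fderiv ℝ (V p) y (f p y) ≤ -lam₀ * V p y)
    -- (iii) ratio bound
    (hratio : ∀ p₁ p₂ y, V p₁ y ≤ μ * V p₂ y)
    -- the randomly switched system: solutions from every initial condition
    (σ : Ω → ℝ → P) (N : Ω → ℝ → ℕ) (τ : Ω → ℕ → ℝ)
    (X : EuclideanSpace ℝ (Fin n) → Ω → ℝ → EuclideanSpace ℝ (Fin n))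
    (hτ0 : ∀ ω, τ ω 0 = 0) (hτmono : ∀ ω, StrictMono (τ ω))
    (hσ : ∀ ω, ∀ i : ℕ, ∀ t ∈ Set.Ico (τ ω i) (τ ω (i + 1)), σ ω t = σ ω (τ ω i))
    (hN : ∀ ω, ∀ t : ℝ, 0 ≤ t → τ ω (N ω t) ≤ t ∧ t < τ ω (N ω t + 1))
    (hx0 : ∀ x₀ ω, X x₀ ω 0 = x₀) (hxcont : ∀ x₀ ω, Continuous (X x₀ ω))
    (hsol : ∀ x₀ ω, ∀ t : ℝ, 0 ≤ t → t ∉ Set.range (τ ω) →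
      HasDerivAt (X x₀ ω) (f (σ ω t) (X x₀ ω t)) t)
    -- (iv) pmf tail bound on the switch count
    (hpmf : ∀ t : ℝ, 0 ≤ t → ∀ k : ℕ, M ≤ k →
      ℙ {ω | N ω t = k} ≤
        ENNReal.ofReal (Real.exp (-lamTilde * t) * (lamBar * t) ^ k / (Nat.factorial k)))
    -- (v) slow switching
    (hslow : μ < (lam₀ + lamTilde) / lamBar) :
    ∀ᵐ ω ∂ℙ, ∀ ε : ℝ, 0 < ε → ∃ δ : ℝ, 0 < δ ∧
      ∀ x₀ : EuclideanSpace ℝ (Fin n), ‖x₀‖ < δ →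
        ∀ t : ℝ, 0 ≤ t → ‖X x₀ ω t‖ < ε := by
  set K : ℕ → ℕ := fun m => M + ⌈lam₀ * m / log μ⌉₊
  have hK : ∀ m : ℕ, exp (lam₀ * m) ≤ μ ^ K m := fun m =>
    (exp_le_pow_ceil_div_log hμ _).trans (pow_le_pow_right₀ hμ.le (Nat.le_add_left _ _))
  set r := ENNReal.ofReal (exp (μ * lamBar - lamTilde - lam₀))
  have hr : r < 1 :=
    ENNReal.ofReal_lt_one.2 (exp_lt_one_iff.2 (by linarith [(lt_div_iff₀ hlb).1 hslow]))
  have hbad : ∀ m : ℕ, ℙ {ω | K m ≤ N ω m} ≤ r ^ m := fun m => by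
    rw [← ENNReal.ofReal_pow (exp_pos _).le, ← exp_nat_mul, mul_comm]
    exact measure_le_le_exp_of_pmf_le_poisson ℙ _ m.cast_nonneg hlb.le hμ.le
      (Nat.le_add_right _ _) (hK m) (hpmf m m.cast_nonneg)
  filter_upwards [ae_eventually_notMem_of_measure_le_pow hr hbad] with ω hω
  obtain ⟨C, hC, hgrowth⟩ := exists_pow_mul_exp_neg_le
    ((hτmono ω).monotoneOn_of_mem_Ico fun t ht => hN ω t ht) hμ.le hlam.le
    (pow_pos (zero_lt_one.trans hμ) (M + 1)) (hω.mono fun m hm =>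
      pow_le_pow_succ_mul_exp_of_lt_add_ceil hμ (by positivity) (not_le.1 hm))
  intro ε hε
  obtain ⟨δ, hδ, hδε⟩ := exists_pos_lt_of_le_mul hα₁mono hα₁0 hα₂cont.continuousAt hα₂0 hC hε
  refine ⟨δ, hδ, fun x₀ hx₀ t ht => hδε _ _ (norm_nonneg _) (norm_nonneg _) hx₀ ?_⟩
  calc α₁ ‖X x₀ ω t‖ ≤ μ ^ N ω t * exp (-(lam₀ * t)) * α₂ ‖X x₀ ω 0‖ :=
        lyapunov_comparison_of_switched hVC1 hsandwich hdecay hratio (by linarith) (hτ0 ω)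
          (hτmono ω) (hσ ω) (hxcont x₀ ω) (hsol x₀ ω) (hN ω t ht)
    _ ≤ C * α₂ ‖x₀‖ := by
      rw [hx0]
      exact mul_le_mul_of_nonneg_right (hgrowth t ht)
        (hα₂0 ▸ hα₂mono.monotoneOn self_mem_Ici (norm_nonneg x₀) (norm_nonneg x₀))

/-- Stability part of GAS a.s.: under the hypotheses of the main theorem, with
probability one, for every `ε > 0` there is `δ > 0` such that `‖x₀‖ < δ` implies
`sup_{t ≥ 0} ‖x(t)‖ < ε`. -/
theorem randomly_switched_as_stability
    {n : ℕ} {P : Type*} [Finite P]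
    {Ω : Type*} [MeasurableSpace Ω] (ℙ : Measure Ω) [IsProbabilityMeasure ℙ]
    (f : P → EuclideanSpace ℝ (Fin n) → EuclideanSpace ℝ (Fin n))
    (hf : ∀ p, LocallyLipschitz (f p)) (hf0 : ∀ p, f p 0 = 0)
    (V : P → EuclideanSpace ℝ (Fin n) → ℝ)
    (hVC1 : ∀ p, ContDiff ℝ 1 (V p))
    (α₁ α₂ : ℝ → ℝ)
    (hα₁cont : Continuous α₁) (hα₁mono : StrictMonoOn α₁ (Set.Ici 0))
    (hα₁0 : α₁ 0 = 0) (hα₁inf : Filter.Tendsto α₁ Filter.atTop Filter.atTop)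
    (hα₂cont : Continuous α₂) (hα₂mono : StrictMonoOn α₂ (Set.Ici 0))
    (hα₂0 : α₂ 0 = 0) (hα₂inf : Filter.Tendsto α₂ Filter.atTop Filter.atTop)
    (lam₀ lamTilde lamBar μ : ℝ) (M : ℕ)
    (hlam : 0 < lam₀) (hlt : 0 < lamTilde) (hlb : 0 < lamBar) (hμ : 1 < μ)
    -- (i) class-K∞ sandwich
    (hsandwich : ∀ p y, α₁ ‖y‖ ≤ V p y ∧ V p y ≤ α₂ ‖y‖)
    -- (ii) decay of each subsystem
    (hdecay : ∀ p y, fderiv ℝ (V p) y (f p y) ≤ -lam₀ * V p y)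
    -- (iii) ratio bound
    (hratio : ∀ p₁ p₂ y, V p₁ y ≤ μ * V p₂ y)
    -- the randomly switched system: solutions from every initial condition
    (σ : Ω → ℝ → P) (N : Ω → ℝ → ℕ) (τ : Ω → ℕ → ℝ)
    (X : EuclideanSpace ℝ (Fin n) → Ω → ℝ → EuclideanSpace ℝ (Fin n))
    (hτ0 : ∀ ω, τ ω 0 = 0) (hτmono : ∀ ω, StrictMono (τ ω))
    (hτdiv : ∀ ω, Filter.Tendsto (τ ω) Filter.atTop Filter.atTop)
    (hσ : ∀ ω, ∀ i : ℕ, ∀ t ∈ Set.Ico (τ ω i) (τ ω (i + 1)), σ ω t = σ ω (τ ω i))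
    (hN : ∀ ω, ∀ t : ℝ, 0 ≤ t → τ ω (N ω t) ≤ t ∧ t < τ ω (N ω t + 1))
    (hx0 : ∀ x₀ ω, X x₀ ω 0 = x₀) (hxcont : ∀ x₀ ω, Continuous (X x₀ ω))
    (hsol : ∀ x₀ ω, ∀ t : ℝ, 0 ≤ t → t ∉ Set.range (τ ω) →
      HasDerivAt (X x₀ ω) (f (σ ω t) (X x₀ ω t)) t)
    (hNmeas : ∀ t : ℝ, Measurable (fun ω => N ω t))
    -- (iv) pmf tail bound on the switch count
    (hpmf : ∀ t : ℝ, 0 ≤ t → ∀ k : ℕ, M ≤ k →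
      ℙ {ω | N ω t = k} ≤
        ENNReal.ofReal (Real.exp (-lamTilde * t) * (lamBar * t) ^ k / (Nat.factorial k)))
    -- (v) slow switching
    (hslow : μ < (lam₀ + lamTilde) / lamBar) :
    ∀ᵐ ω ∂ℙ, ∀ ε : ℝ, 0 < ε → ∃ δ : ℝ, 0 < δ ∧
      ∀ x₀ : EuclideanSpace ℝ (Fin n), ‖x₀‖ < δ →
        ∀ t : ℝ, 0 ≤ t → ‖X x₀ ω t‖ < ε :=
  randomly_switched_as_stability_general ℙ f V hVC1 α₁ α₂ hα₁mono hα₁0 hα₂cont hα₂mono hα₂0 lam₀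
    lamTilde lamBar μ M hlam hlb hμ hsandwich hdecay hratio σ N τ X hτ0 hτmono hσ hN hx0 hxcont hsol
    hpmf hslow
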